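/- Let f be a Boolean function on k+1 variables that depends on all of them and let Ψ = f(H_{k0},…,H_{kk}). If θ is a partial assignment having at least 3 pairwise independent transversals, then every variable occurring in a prime implicant P_{ℓ,i,j} indexed by a transversal (i,j) of θ is a variable on which the function Ψ[θ] depends. -/

import Mathlib

/-! ### Basic notions on Boolean functions -/

namespace BF

variable {V : Type}

/-- Restriction `Φ[θ]` of a Boolean function `Φ` by a partial assignment `θ`. -/
def restrict (Φ : (V → Bool) → Bool) (θ : V → Option Bool) : (V → Bool) → Bool :=
  fun a => Φ (fun v => (θ v).getD (a v))

/-- Combination `θ ∪ μ` of two partial assignments, where `θ` takes priority. -/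
def combine (θ μ : V → Option Bool) : V → Option Bool :=
  fun v => (θ v).elim (μ v) some

/-- The partial assignment setting the single variable `X` to `b`. -/
def single [DecidableEq V] (X : V) (b : Bool) : V → Option Bool :=
  fun v => if v = X then some b else none

/-- A term (conjunction of literals, given as a partial assignment) implies `Φ`. -/
def TermImplies (τ : V → Option Bool) (Φ : (V → Bool) → Bool) : Prop :=
  ∀ a : V → Bool, (∀ v b, τ v = some b → a v = b) → Φ a = true

/-- `τ'` is a subterm (subconjunction) of `τ`. -/
def Subterm (τ' τ : V → Option Bool) : Prop :=
  ∀ v b, τ' v = some b → τ v = some b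

/-- `τ` is a prime implicant of `Φ`: it implies `Φ`, and no proper subconjunction does. -/
def IsPrimeImplicant (τ : V → Option Bool) (Φ : (V → Bool) → Bool) : Prop :=
  TermImplies τ Φ ∧ ∀ τ', Subterm τ' τ → τ' ≠ τ → ¬ TermImplies τ' Φ

/-- The variable `X` is a unit of `Φ`: by itself (positively) a prime implicant of `Φ`. -/
def IsUnit [DecidableEq V] (X : V) (Φ : (V → Bool) → Bool) : Prop :=
  IsPrimeImplicant (single X true) Φ

/-- `Φ` depends on the variable `v`. -/
def DependsOnVar [DecidableEq V] (Φ : (V → Bool) → Bool) (v : V) : Prop :=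
  ∃ a : V → Bool, Φ (Function.update a v true) ≠ Φ (Function.update a v false)

/-- The set of units of `Φ`. -/
def unitSet [DecidableEq V] (Φ : (V → Bool) → Bool) : Set V :=
  {X | IsUnit X Φ}

/-- The degree of a variable `X` in `Φ`: the maximum over partial assignments `θ`
(not assigning `X`) of the number of units of `Φ[θ ∪ {X=1}]` that are not units of
`Φ[θ]`. -/
noncomputable def degreeOf [Fintype V] [DecidableEq V] (Φ : (V → Bool) → Bool) (X : V) : ℕ :=
  sSup { m | ∃ θ : V → Option Bool, θ X = none ∧
    m = (unitSet (restrict Φ (combine (single X true) θ)) \ unitSet (restrict Φ θ)).ncard }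

/-- `Δ(Φ)`: the maximum degree of any variable of `Φ`. -/
noncomputable def maxDegree [Fintype V] [DecidableEq V] (Φ : (V → Bool) → Bool) : ℕ :=
  Finset.univ.sup (fun X => degreeOf Φ X)

end BF

/-! ### FBDDs (free binary decision diagrams), possibly multi-output -/

/-- A node of a (multi-output) FBDD: a sink labeled by an output value, or a decision
node labeled by a variable with a 0-edge and a 1-edge (children are given as indices,
which are required to be smaller, guaranteeing acyclicity). -/
inductive BddNode (V O : Type) where
  | sink (o : O)
  | decision (x : V) (lo hi : ℕ)

/-- A (multi-output) FBDD structure: a rooted DAG with nodes `0, …, size-1`, in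
topological order (edges decrease the index).  Freeness (read-once) is the
predicate `FBDD.ReadOnce` below. -/
structure FBDD (V O : Type) where
  size : ℕ
  node : Fin size → BddNode V O
  root : Fin size
  dec : ∀ (i : Fin size) (x : V) (lo hi : ℕ),
      node i = .decision x lo hi → lo < i.1 ∧ hi < i.1

namespace FBDD

variable {V O : Type}

/-- The output computed at node `i` on the total assignment `a`. -/
def evalAt (F : FBDD V O) (a : V → Bool) (i : Fin F.size) : O :=
  match h : F.node i with
  | .sink o => o
  | .decision x lo hi =>
      have hd := F.dec i x lo hi h
      if a x then F.evalAt a ⟨hi, hd.2.trans i.isLt⟩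
      else F.evalAt a ⟨lo, hd.1.trans i.isLt⟩
termination_by i.1
decreasing_by
  · exact hd.2
  · exact hd.1

/-- The output of the FBDD on a total assignment. -/
def eval (F : FBDD V O) (a : V → Bool) : O := F.evalAt a F.root

/-- Edge relation of the underlying DAG. -/
def edge (F : FBDD V O) (i j : Fin F.size) : Prop :=
  ∃ x lo hi, F.node i = .decision x lo hi ∧ (j.1 = lo ∨ j.1 = hi)

/-- Reachability in the underlying DAG. -/
def reach (F : FBDD V O) : Fin F.size → Fin F.size → Prop :=
  Relation.ReflTransGen F.edge

/-- Node `i` tests the variable `x`. -/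
def tests (F : FBDD V O) (i : Fin F.size) (x : V) : Prop :=
  ∃ lo hi, F.node i = .decision x lo hi

/-- The FBDD is free (read-once): along every path from the root, each variable is
tested at most once. -/
def ReadOnce (F : FBDD V O) : Prop :=
  ∀ i c j x, F.reach F.root i → F.tests i x → F.edge i c → F.reach c j →
    ¬ F.tests j x

/-- A single-output FBDD computes the Boolean function `Φ`. -/
def Computes (F : FBDD V Bool) (Φ : (V → Bool) → Bool) : Prop :=
  ∀ a, F.eval a = Φ a

/-- A multi-output FBDD simultaneously computes the `m` Boolean functions `Φ`. -/
def ComputesAll {m : ℕ} (F : FBDD V (Fin m → Bool)) (Φ : Fin m → (V → Bool) → Bool) : Prop :=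
  ∀ a l, F.eval a l = Φ l a

/-- The Boolean function computed by the sub-DAG rooted at node `u`. -/
def funAt (F : FBDD V Bool) (u : Fin F.size) : (V → Bool) → Bool :=
  fun a => F.evalAt a u

/-- The FBDD follows the unit rule: at every (reachable) node `u` whose function has a
unit, the variable tested at `u` is a unit of that function. -/
def FollowsUnitRule [DecidableEq V] (F : FBDD V Bool) : Prop :=
  ∀ u : Fin F.size, F.reach F.root u → (∃ X, BF.IsUnit X (F.funAt u)) →
    ∀ x, F.tests u x → BF.IsUnit x (F.funAt u)

end FBDD

/-! ### DLDDs (decomposable logic decision diagrams) -/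

/-- A node of a DLDD: a sink, a decision node, a NOT-node, or a binary
AND/OR/XOR/EQUIV gate (children given as smaller indices). -/
inductive DlddNode (V : Type) where
  | sink (b : Bool)
  | decision (x : V) (lo hi : ℕ)
  | not (c : ℕ)
  | and (c1 c2 : ℕ)
  | or (c1 c2 : ℕ)
  | xor (c1 c2 : ℕ)
  | equiv (c1 c2 : ℕ)

/-- The children of a DLDD node. -/
def DlddNode.children {V : Type} : DlddNode V → List ℕ
  | .sink _ => []
  | .decision _ lo hi => [lo, hi]
  | .not c => [c]
  | .and c1 c2 => [c1, c2]
  | .or c1 c2 => [c1, c2]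
  | .xor c1 c2 => [c1, c2]
  | .equiv c1 c2 => [c1, c2]

/-- The children of a DLDD node, if it is a binary gate. -/
def DlddNode.gateChildren {V : Type} : DlddNode V → Option (ℕ × ℕ)
  | .and c1 c2 => some (c1, c2)
  | .or c1 c2 => some (c1, c2)
  | .xor c1 c2 => some (c1, c2)
  | .equiv c1 c2 => some (c1, c2)
  | _ => none

/-- A DLDD structure: a rooted DAG with nodes `0, …, size-1` in topological order.
Freeness and decomposability are the predicates `DLDD.ReadOnce` and
`DLDD.Decomposable` below. -/
structure DLDD (V : Type) where
  size : ℕ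
  node : Fin size → DlddNode V
  root : Fin size
  dec : ∀ (i : Fin size), ∀ c ∈ (node i).children, c < i.1

namespace DLDD

variable {V : Type}

/-- The Boolean value computed at node `i` on a total assignment `a`. -/
def evalAt (D : DLDD V) (a : V → Bool) (i : Fin D.size) : Bool :=
  match h : D.node i with
  | .sink b => b
  | .decision x lo hi =>
      have hlo : lo < i.1 := D.dec i lo (by rw [h]; simp [DlddNode.children])
      have hhi : hi < i.1 := D.dec i hi (by rw [h]; simp [DlddNode.children])
      if a x then D.evalAt a ⟨hi, hhi.trans i.isLt⟩
      else D.evalAt a ⟨lo, hlo.trans i.isLt⟩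
  | .not c =>
      have hc : c < i.1 := D.dec i c (by rw [h]; simp [DlddNode.children])
      ! D.evalAt a ⟨c, hc.trans i.isLt⟩
  | .and c1 c2 =>
      have h1 : c1 < i.1 := D.dec i c1 (by rw [h]; simp [DlddNode.children])
      have h2 : c2 < i.1 := D.dec i c2 (by rw [h]; simp [DlddNode.children])
      D.evalAt a ⟨c1, h1.trans i.isLt⟩ && D.evalAt a ⟨c2, h2.trans i.isLt⟩
  | .or c1 c2 =>
      have h1 : c1 < i.1 := D.dec i c1 (by rw [h]; simp [DlddNode.children])
      have h2 : c2 < i.1 := D.dec i c2 (by rw [h]; simp [DlddNode.children])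
      D.evalAt a ⟨c1, h1.trans i.isLt⟩ || D.evalAt a ⟨c2, h2.trans i.isLt⟩
  | .xor c1 c2 =>
      have h1 : c1 < i.1 := D.dec i c1 (by rw [h]; simp [DlddNode.children])
      have h2 : c2 < i.1 := D.dec i c2 (by rw [h]; simp [DlddNode.children])
      Bool.xor (D.evalAt a ⟨c1, h1.trans i.isLt⟩) (D.evalAt a ⟨c2, h2.trans i.isLt⟩)
  | .equiv c1 c2 =>
      have h1 : c1 < i.1 := D.dec i c1 (by rw [h]; simp [DlddNode.children])
      have h2 : c2 < i.1 := D.dec i c2 (by rw [h]; simp [DlddNode.children])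
      D.evalAt a ⟨c1, h1.trans i.isLt⟩ == D.evalAt a ⟨c2, h2.trans i.isLt⟩
termination_by i.1
decreasing_by
  · exact hhi
  · exact hlo
  · exact hc
  · exact h1
  · exact h2
  · exact h1
  · exact h2
  · exact h1
  · exact h2
  · exact h1
  · exact h2

/-- The Boolean value computed by the DLDD. -/
def eval (D : DLDD V) (a : V → Bool) : Bool := D.evalAt a D.root

/-- Edge relation of the underlying DAG. -/
def edge (D : DLDD V) (i j : Fin D.size) : Prop := j.1 ∈ (D.node i).children

/-- Reachability in the underlying DAG. -/
def reach (D : DLDD V) : Fin D.size → Fin D.size → Prop :=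
  Relation.ReflTransGen D.edge

/-- Node `i` is a decision node testing the variable `x`. -/
def tests (D : DLDD V) (i : Fin D.size) (x : V) : Prop :=
  ∃ lo hi, D.node i = .decision x lo hi

/-- Along every path from the root, each variable is tested at most once. -/
def ReadOnce (D : DLDD V) : Prop :=
  ∀ i c j x, D.reach D.root i → D.tests i x → D.edge i c → D.reach c j →
    ¬ D.tests j x

/-- The variable `x` is mentioned in the sub-DAG rooted at `i`. -/
def mentions (D : DLDD V) (i : Fin D.size) (x : V) : Prop :=
  ∃ j, D.reach i j ∧ D.tests j x

/-- Decomposability: the two children's sub-DAGs of any (reachable) binary gate node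
mention no common variable. -/
def Decomposable (D : DLDD V) : Prop :=
  ∀ (i : Fin D.size) (c1 c2 : ℕ), D.reach D.root i →
    (D.node i).gateChildren = some (c1, c2) →
    ∀ (h1 : c1 < D.size) (h2 : c2 < D.size) (x : V),
      ¬ (D.mentions ⟨c1, h1⟩ x ∧ D.mentions ⟨c2, h2⟩ x)

/-- The DLDD computes the Boolean function `Φ`. -/
def Computes (D : DLDD V) (Φ : (V → Bool) → Bool) : Prop :=
  ∀ a, D.eval a = Φ a

end DLDD

/-! ### The queries `h_{kℓ}` and their lineages `H_{kℓ}` -/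

/-- The Boolean variables `R(i)`, `S_ℓ(i,j)` (for `1 ≤ ℓ ≤ k`, encoded by `Fin k`),
and `T(j)`, for `i, j ∈ [n]`. -/
inductive HVar (n k : ℕ) where
  | R (i : Fin n)
  | S (l : Fin k) (i j : Fin n)
  | T (j : Fin n)
deriving DecidableEq

/-- The first variable of the prime implicant `P_{ℓ,i,j}`: `R(i)` if `ℓ = 0`,
otherwise `S_ℓ(i,j)`. -/
def leftVar (n k : ℕ) (l : Fin (k+1)) (i j : Fin n) : HVar n k :=
  if h : l.1 = 0 then .R i else .S ⟨l.1 - 1, by have := l.isLt; omega⟩ i j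

/-- The second variable of the prime implicant `P_{ℓ,i,j}`: `T(j)` if `ℓ = k`,
otherwise `S_{ℓ+1}(i,j)`. -/
def rightVar (n k : ℕ) (l : Fin (k+1)) (i j : Fin n) : HVar n k :=
  if h : l.1 = k then .T j else .S ⟨l.1, by have := l.isLt; omega⟩ i j

/-- The conjunction `P_{ℓ,i,j}` as a Boolean function. -/
def Pfun (n k : ℕ) (l : Fin (k+1)) (i j : Fin n) : (HVar n k → Bool) → Bool :=
  fun a => a (leftVar n k l i j) && a (rightVar n k l i j)

/-- The conjunction `P_{ℓ,i,j}` as a term (partial assignment). -/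
def Pterm (n k : ℕ) (l : Fin (k+1)) (i j : Fin n) : HVar n k → Option Bool :=
  fun v => if v = leftVar n k l i j ∨ v = rightVar n k l i j then some true else none

/-- The lineage `H_{kℓ} = ⋁_{i,j∈[n]} P_{ℓ,i,j}`. -/
def Hfun (n k : ℕ) (l : Fin (k+1)) : (HVar n k → Bool) → Bool :=
  fun a => decide (∃ i j : Fin n, Pfun n k l i j a = true)

/-- The lineage `H_k = H_{k0} ∨ H_{k1} ∨ ⋯ ∨ H_{kk}`. -/
def HkFun (n k : ℕ) : (HVar n k → Bool) → Bool :=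
  fun a => decide (∃ l : Fin (k+1), Hfun n k l a = true)

/-- The lineages `B_0 = ⋁_i R(i)`, `B_ℓ = ⋁_{i,j} S_ℓ(i,j)` for `1 ≤ ℓ ≤ k`, and
`B_{k+1} = ⋁_j T(j)`. -/
def Bfun (n k : ℕ) (l : Fin (k+2)) : (HVar n k → Bool) → Bool :=
  fun a => decide (∃ i j : Fin n,
    (if _ : l.1 = 0 then a (.R i)
     else if _ : l.1 = k + 1 then a (.T j)
     else a (.S ⟨l.1 - 1, by have := l.isLt; omega⟩ i j)) = true)

/-- A Boolean function `f` on `m` variables depends on its `l`-th variable: some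
assignment `μ` to the remaining variables restricts `f` to `X_l` or `¬X_l`. -/
def BoolDependsOn {m : ℕ} (f : (Fin m → Bool) → Bool) (l : Fin m) : Prop :=
  ∃ μ : Fin m → Bool,
    (∀ b, f (Function.update μ l b) = b) ∨ (∀ b, f (Function.update μ l b) = !b)

/-- The lineage `Ψ = f(H_{k0}, …, H_{kk})`. -/
def Psi (n k : ℕ) (f : (Fin (k+1) → Bool) → Bool) : (HVar n k → Bool) → Bool :=
  fun a => f (fun l => Hfun n k l a)

/-- `(i,j)` is a transversal of the partial assignment `θ`: for every `0 ≤ ℓ ≤ k`,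
`P_{ℓ,i,j}` is a prime implicant of `H_{kℓ}[θ]`. -/
def Transversal (n k : ℕ) (θ : HVar n k → Option Bool) (p : Fin n × Fin n) : Prop :=
  ∀ l : Fin (k+1), BF.IsPrimeImplicant (Pterm n k l p.1 p.2) (BF.restrict (Hfun n k l) θ)

/-- Two pairs of indices are independent: they differ in both coordinates. -/
def IndepPairs {n : ℕ} (p q : Fin n × Fin n) : Prop := p.1 ≠ q.1 ∧ p.2 ≠ q.2

/-- `θ` has (at least) `m` pairwise independent transversals. -/
def HasIndepTransversals (n k : ℕ) (θ : HVar n k → Option Bool) (m : ℕ) : Prop :=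
  ∃ S : Finset (Fin n × Fin n), m ≤ S.card ∧ (∀ p ∈ S, Transversal n k θ p) ∧
    (S : Set (Fin n × Fin n)).Pairwise IndepPairs

/-- The maximum number of pairwise independent transversals of `θ`. -/
noncomputable def maxIndepTransversals (n k : ℕ) (θ : HVar n k → Option Bool) : ℕ :=
  sSup { m | ∃ S : Finset (Fin n × Fin n), S.card = m ∧ (∀ p ∈ S, Transversal n k θ p) ∧
    (S : Set (Fin n × Fin n)).Pairwise IndepPairs }

/-- A restriction `Φ` of `Ψ = f(H_{k0},…,H_{kk})` is transversal-free: some `θ` with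
`Ψ[θ] = Φ` has no transversals. -/
def TransversalFree (n k : ℕ) (f : (Fin (k+1) → Bool) → Bool)
    (Φ : (HVar n k → Bool) → Bool) : Prop :=
  ∃ θ : HVar n k → Option Bool, BF.restrict (Psi n k f) θ = Φ ∧
    ∀ p : Fin n × Fin n, ¬ Transversal n k θ p

/-- `Z` is an `H_k`-unit of the restriction `Φ` of `Ψ`: `Φ[Z=1]` is transversal-free
but `Φ` is not. -/
def IsHkUnit (n k : ℕ) (f : (Fin (k+1) → Bool) → Bool) (Z : HVar n k)
    (Φ : (HVar n k → Bool) → Bool) : Prop :=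
  TransversalFree n k f (BF.restrict Φ (BF.single Z true)) ∧ ¬ TransversalFree n k f Φ

/-- A restriction `Φ` of `Ψ` is transparent: the residual lineages `H_{kℓ}[θ]` are
the same for every `θ` with `Ψ[θ] = Φ`. -/
def Transparent (n k : ℕ) (f : (Fin (k+1) → Bool) → Bool)
    (Φ : (HVar n k → Bool) → Bool) : Prop :=
  ∃ φ : Fin (k+1) → ((HVar n k → Bool) → Bool),
    ∀ θ : HVar n k → Option Bool, BF.restrict (Psi n k f) θ = Φ →
      ∀ l, BF.restrict (Hfun n k l) θ = φ l

/-- The Boolean variables of the query `h_0`. -/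
inductive H0Var (n : ℕ) where
  | R (i : Fin n)
  | S (i j : Fin n)
  | T (j : Fin n)
deriving DecidableEq

/-- The lineage `H_0 = ⋁_{i,j∈[n]} R(i) ∧ S(i,j) ∧ T(j)`. -/
def H0Fun (n : ℕ) : (H0Var n → Bool) → Bool :=
  fun a => decide (∃ i j : Fin n, (a (.R i) && a (.S i j) && a (.T j)) = true)

/-! Write `chain (i,j)` for the path `R(i), S_1(i,j), …, S_k(i,j), T(j)`, so that
`P_{ℓ,i,j}` is made of its slots `ℓ` and `ℓ+1`. A transversal `t` of `θ` leaves its whole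
path free, and primality of `P_{ℓ,t}` forbids implicants of `H_{kℓ}[θ]` made of variables
set true by `θ` together with variables of `P_{ℓ,t}`. Hence on assignments whose true
variables lie on paths of transversals, `θ` is invisible to every `H_{kℓ}`.

Let `X` be a variable of `P_{L,c}` and `μ` witness that `f` depends on `X_L`. With two more
transversals, `e` independent of `c` and of `d ≠ c`, we build assignments `a_1`, `a_0` that
differ only at `X` and satisfy `H_{kℓ}[θ](a_b) = μ[L ↦ b](ℓ)`: the path of `c` carries
`P_{L,c}` (without `X` in `a_0`), and every other level `ℓ` with `μ ℓ` is put on the path of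
`d` or of `e`. Levels `ℓ` and `ℓ+2` must not share a helper, since together they would
realise level `ℓ+1`, and the levels on `d` stay two away from the end where the paths of `c`
and `d` meet. Then `Ψ[θ](a_b) = f(μ[L ↦ b])` is `b` or `¬b`. -/

namespace HVar

variable {n k : ℕ}

def chain (u : Fin n × Fin n) (s : ℕ) : HVar n k :=
  if h0 : s = 0 then .R u.1 else if h : s ≤ k then .S ⟨s - 1, by omega⟩ u.1 u.2 else .T u.2

lemma leftVar_eq_chain (l : Fin (k+1)) (i j : Fin n) :
    leftVar n k l i j = chain (i, j) l := by
  unfold leftVar chain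
  split_ifs <;> first | rfl | omega

lemma rightVar_eq_chain (l : Fin (k+1)) (i j : Fin n) :
    rightVar n k l i j = chain (i, j) (l + 1) := by
  unfold rightVar chain
  split_ifs <;> first | rfl | omega

lemma chain_eq_chain_iff {u u' : Fin n × Fin n} {s : ℕ} :
    (chain u s : HVar n k) = chain u' s ↔ (s ≤ k → u.1 = u'.1) ∧ (1 ≤ s → u.2 = u'.2) := by
  unfold chain
  split_ifs <;> simp <;> omega

lemma slot_eq_of_chain_eq {u u' : Fin n × Fin n} {s s' : ℕ} (hs : s ≤ k + 1) (hs' : s' ≤ k + 1)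
    (h : (chain u s : HVar n k) = chain u' s') : s = s' := by
  unfold chain at h
  split_ifs at h <;> simp at h <;> omega

lemma leftVar_ne_rightVar (l : Fin (k+1)) (i j : Fin n) :
    leftVar n k l i j ≠ rightVar n k l i j := by
  rw [leftVar_eq_chain, rightVar_eq_chain]
  intro h
  have := slot_eq_of_chain_eq (by omega) (by omega) h
  omega

end HVar

open HVar

variable {n k : ℕ}

/-- Some `P_{ℓ,q}` starts on the path of `u` and ends on the path of `u'`. -/
def LinkedAt (k l : ℕ) (u u' : Fin n × Fin n) : Prop :=
  (l < k → u.1 = u'.1) ∧ (0 < l → u.2 = u'.2)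

lemma exists_pair_iff_linkedAt {l : ℕ} (hl : l ≤ k) {u u' : Fin n × Fin n} :
    (∃ q, (chain q l : HVar n k) = chain u l ∧ (chain q (l + 1) : HVar n k) = chain u' (l + 1)) ↔
      LinkedAt k l u u' := by
  simp only [chain_eq_chain_iff]
  constructor
  · rintro ⟨q, ⟨h1, h2⟩, h3, h4⟩
    exact ⟨fun h => (h1 hl).symm.trans (h3 h), fun h => (h2 h).symm.trans (h4 (by omega))⟩
  · rintro ⟨h1, h2⟩
    exact ⟨(u.1, u'.2), ⟨fun _ => rfl, fun h => (h2 h).symm⟩, fun h => h1 h, fun _ => rfl⟩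

lemma linkedAt_of_chain_eq {u u' : Fin n × Fin n} {s : ℕ}
    (h : (chain u s : HVar n k) = chain u' s) : LinkedAt k (min s k) u u' := by
  rw [chain_eq_chain_iff] at h
  exact ⟨fun _ => h.1 (by omega), fun _ => h.2 (by omega)⟩

lemma LinkedAt.refl (l : ℕ) (u : Fin n × Fin n) : LinkedAt k l u u :=
  ⟨fun _ => rfl, fun _ => rfl⟩

lemma LinkedAt.symm {l : ℕ} {u u' : Fin n × Fin n} (h : LinkedAt k l u u') : LinkedAt k l u' u :=
  ⟨fun hl => (h.1 hl).symm, fun hl => (h.2 hl).symm⟩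

lemma IndepPairs.symm {u u' : Fin n × Fin n} (h : IndepPairs u u') : IndepPairs u' u :=
  ⟨h.1.symm, h.2.symm⟩

lemma IndepPairs.not_linkedAt (hk : 1 ≤ k) {l : ℕ} (hl : l ≤ k) {u u' : Fin n × Fin n}
    (h : IndepPairs u u') : ¬ LinkedAt k l u u' := fun hlink => by
  rcases Nat.lt_or_ge l k with hlk | hlk
  · exact h.1 (hlink.1 hlk)
  · exact h.2 (hlink.2 (by omega))

/-- `Φ[θ]` does not depend on a variable `θ` assigns, so dropping it from `τ` leaves an
implicant. -/
lemma BF.IsPrimeImplicant.eq_none_of_restrict {V : Type} [DecidableEq V]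
    {τ θ : V → Option Bool} {Φ : (V → Bool) → Bool} (h : BF.IsPrimeImplicant τ (BF.restrict Φ θ))
    {v : V} (hv : τ v ≠ none) : θ v = none := by
  obtain ⟨b, hb⟩ := Option.ne_none_iff_exists'.mp hv
  by_contra hθ
  obtain ⟨c, hc⟩ := Option.ne_none_iff_exists'.mp hθ
  refine h.2 (Function.update τ v none) (fun w b' hw => ?_) (fun heq => ?_) (fun a ha => ?_)
  · by_cases hwv : w = v
    · subst hwv; simp at hw
    · rwa [Function.update_of_ne hwv] at hw
  · simpa [hb] using congrFun heq v
  · have hupd : BF.restrict Φ θ a = BF.restrict Φ θ (Function.update a v b) := by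
      unfold BF.restrict
      congr 1
      funext w
      by_cases hwv : w = v
      · subst hwv; simp [hc]
      · simp [Function.update_of_ne hwv]
    rw [hupd]
    refine h.1 _ (fun w b' hw => ?_)
    by_cases hwv : w = v
    · subst hwv; rw [hb] at hw; cases hw; simp
    · rw [Function.update_of_ne hwv]
      exact ha w b' (by rwa [Function.update_of_ne hwv])

lemma Pterm_eq_some_true_iff {l : Fin (k+1)} {i j : Fin n} {v : HVar n k} :
    Pterm n k l i j v = some true ↔ v = leftVar n k l i j ∨ v = rightVar n k l i j := by
  unfold Pterm
  split_ifs <;> simp_all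

namespace Transversal

variable {θ : HVar n k → Option Bool} {t : Fin n × Fin n}

lemma chain_eq_none (ht : Transversal n k θ t) {s : ℕ} (hs : s ≤ k + 1) :
    θ (chain t s) = none := by
  rcases Nat.lt_or_ge s (k + 1) with hs' | hs'
  · have := (ht ⟨s, hs'⟩).eq_none_of_restrict (v := leftVar n k ⟨s, hs'⟩ t.1 t.2)
      (by simp [Pterm_eq_some_true_iff.mpr (Or.inl rfl)])
    rwa [leftVar_eq_chain] at this
  · obtain rfl : s = k + 1 := by omega
    have := (ht ⟨k, by omega⟩).eq_none_of_restrict (v := rightVar n k ⟨k, by omega⟩ t.1 t.2)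
      (by simp [Pterm_eq_some_true_iff.mpr (Or.inr rfl)])
    rwa [rightVar_eq_chain] at this

/-- The variables of `P_{ℓ,i,j}` not set true by `θ` form an implicant `τ` of `H_{kℓ}[θ]`
inside `P_{ℓ,t}`; by primality `τ = P_{ℓ,t}`, which has two variables. -/
lemma not_true_of_covered (ht : Transversal n k θ t) (l : Fin (k+1)) (i j : Fin n)
    (hcov : ∀ v, (v = leftVar n k l i j ∨ v = rightVar n k l i j) →
      θ v = some true ∨ Pterm n k l t.1 t.2 v = some true) :
    ∀ v, (v = leftVar n k l i j ∨ v = rightVar n k l i j) → θ v ≠ some true := by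
  classical
  let τ : HVar n k → Option Bool := fun v =>
    if (v = leftVar n k l i j ∨ v = rightVar n k l i j) ∧ θ v ≠ some true then some true else none
  have hτ : ∀ v b, τ v = some b ↔
      b = true ∧ (v = leftVar n k l i j ∨ v = rightVar n k l i j) ∧ θ v ≠ some true := by
    intro v b
    simp only [τ]
    split_ifs <;> simp_all [eq_comm]
  have himp : BF.TermImplies τ (BF.restrict (Hfun n k l) θ) := by
    intro a ha
    have hval : ∀ v, (v = leftVar n k l i j ∨ v = rightVar n k l i j) →
        (θ v).getD (a v) = true := by
      intro v hv
      by_cases hvt : θ v = some true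
      · simp [hvt]
      · have hfree : θ v = none := (ht l).eq_none_of_restrict (by
          simp [(hcov v hv).resolve_left hvt])
        simpa [hfree] using ha v true ((hτ v true).mpr ⟨rfl, hv, hvt⟩)
    simpa [BF.restrict, Hfun, Pfun] using
      ⟨i, j, hval _ (Or.inl rfl), hval _ (Or.inr rfl)⟩
  have hsub : BF.Subterm τ (Pterm n k l t.1 t.2) := by
    intro v b hv
    obtain ⟨rfl, hv, hvt⟩ := (hτ v b).mp hv
    exact (hcov v hv).resolve_left hvt
  have heq : τ = Pterm n k l t.1 t.2 := by
    by_contra hne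
    exact (ht l).2 τ hsub hne himp
  have hL := (hτ _ true).mp (heq ▸ Pterm_eq_some_true_iff.mpr (Or.inl rfl))
  have hR := (hτ _ true).mp (heq ▸ Pterm_eq_some_true_iff.mpr (Or.inr rfl))
  have hLR := leftVar_ne_rightVar l t.1 t.2
  intro v hv hvt
  rcases hv with rfl | rfl <;> rcases hL.2.1 with h | h <;> rcases hR.2.1 with h' | h' <;>
    first | exact hL.2.2 (h ▸ hvt) | exact hR.2.2 (h' ▸ hvt) | exact hLR (h.trans h'.symm)

end Transversal

section ChainAssignment

lemma hfun_eq_true_iff {l : Fin (k+1)} {a : HVar n k → Bool} :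
    Hfun n k l a = true ↔
      ∃ i j, a (leftVar n k l i j) = true ∧ a (rightVar n k l i j) = true := by
  simp [Hfun, Pfun]

variable {ι : Type} {θ : HVar n k → Option Bool}

lemma restrict_hfun_eq_of_transversal [Nonempty ι] {w : ι → Fin n × Fin n}
    (hw : ∀ t, Transversal n k θ (w t)) {a : HVar n k → Bool}
    (ha : ∀ v, a v = true → ∃ t, ∃ s ≤ k + 1, v = chain (w t) s) (l : Fin (k+1)) :
    BF.restrict (Hfun n k l) θ a = Hfun n k l a := by
  have hfree : ∀ v, a v = true → θ v = none := by
    intro v hv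
    obtain ⟨t, s, hs, rfl⟩ := ha v hv
    exact (hw t).chain_eq_none hs
  have hcov : ∀ i j v, (v = leftVar n k l i j ∨ v = rightVar n k l i j) → a v = true →
      ∃ t, Pterm n k l (w t).1 (w t).2 v = some true := by
    intro i j v hv hav
    obtain ⟨t, s, hs, rfl⟩ := ha v hav
    refine ⟨t, Pterm_eq_some_true_iff.mpr ?_⟩
    rw [leftVar_eq_chain, rightVar_eq_chain] at hv ⊢
    rcases hv with h | h
    · exact Or.inl (by rw [slot_eq_of_chain_eq hs (by omega) h])
    · exact Or.inr (by rw [slot_eq_of_chain_eq hs (by omega) h])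
  have hget : ∀ v, (θ v).getD (a v) = true → θ v = some true ∨ a v = true := by
    intro v hv
    cases h : θ v <;> simp_all
  rw [Bool.eq_iff_iff, BF.restrict, hfun_eq_true_iff, hfun_eq_true_iff]
  constructor
  · rintro ⟨i, j, hL, hR⟩
    rcases hget _ hL with hL' | hL' <;> rcases hget _ hR with hR' | hR'
    · exact absurd hL' ((hw (Classical.arbitrary ι)).not_true_of_covered l i j
        (by rintro v (rfl | rfl) <;> simp [hL', hR']) _ (Or.inl rfl))
    · obtain ⟨t, ht⟩ := hcov i j _ (Or.inr rfl) hR'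
      exact absurd hL' ((hw t).not_true_of_covered l i j
        (by rintro v (rfl | rfl) <;> simp [hL', ht]) _ (Or.inl rfl))
    · obtain ⟨t, ht⟩ := hcov i j _ (Or.inl rfl) hL'
      exact absurd hR' ((hw t).not_true_of_covered l i j
        (by rintro v (rfl | rfl) <;> simp [hR', ht]) _ (Or.inr rfl))
    · exact ⟨i, j, hL', hR'⟩
  · rintro ⟨i, j, hL, hR⟩
    exact ⟨i, j, by simpa [hfree _ hL], by simpa [hfree _ hR]⟩

open Classical in
noncomputable def chainAssignment (w : ι → Fin n × Fin n) (S : ι → Set ℕ) : HVar n k → Bool :=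
  fun v => decide (∃ t, ∃ s ∈ S t, s ≤ k + 1 ∧ v = chain (w t) s)

variable {w : ι → Fin n × Fin n} {S : ι → Set ℕ}

lemma chainAssignment_eq_true_iff {v : HVar n k} :
    chainAssignment w S v = true ↔ ∃ t, ∃ s ∈ S t, s ≤ k + 1 ∧ v = chain (w t) s := by
  simp [chainAssignment]

lemma hfun_chainAssignment_eq_true_iff (l : Fin (k+1)) :
    Hfun n k l (chainAssignment w S) = true ↔
      ∃ t t', l.1 ∈ S t ∧ l.1 + 1 ∈ S t' ∧ LinkedAt k l (w t) (w t') := by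
  simp only [hfun_eq_true_iff, chainAssignment_eq_true_iff, leftVar_eq_chain, rightVar_eq_chain]
  constructor
  · rintro ⟨i, j, ⟨t, s, hs, hsk, h⟩, ⟨t', s', hs', hsk', h'⟩⟩
    obtain rfl := slot_eq_of_chain_eq (by omega) hsk h
    obtain rfl := slot_eq_of_chain_eq (by omega) hsk' h'
    exact ⟨t, t', hs, hs', (exists_pair_iff_linkedAt (by omega)).mp ⟨(i, j), h, h'⟩⟩
  · rintro ⟨t, t', hs, hs', hlink⟩
    obtain ⟨q, h, h'⟩ := (exists_pair_iff_linkedAt (by omega)).mpr hlink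
    exact ⟨q.1, q.2, ⟨t, l, hs, by omega, h⟩, ⟨t', l + 1, hs', by omega, h'⟩⟩

lemma restrict_hfun_chainAssignment [Nonempty ι] (hw : ∀ t, Transversal n k θ (w t))
    (l : Fin (k+1)) :
    BF.restrict (Hfun n k l) θ (chainAssignment w S) = Hfun n k l (chainAssignment w S) :=
  restrict_hfun_eq_of_transversal hw (fun _ hv => by
    obtain ⟨t, s, -, hs, h⟩ := chainAssignment_eq_true_iff.mp hv
    exact ⟨t, s, hs, h⟩) l

lemma chainAssignment_insert [DecidableEq ι] {t₀ : ι} {s₀ : ℕ} (hs₀ : s₀ ≤ k + 1)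
    (hX : chainAssignment w S (chain (w t₀) s₀ : HVar n k) = false) :
    (chainAssignment w (Function.update S t₀ (insert s₀ (S t₀))) : HVar n k → Bool) =
      Function.update (chainAssignment w S) (chain (w t₀) s₀) true := by
  funext v
  by_cases hv : v = chain (w t₀) s₀
  · subst hv
    simp only [Function.update_self, chainAssignment_eq_true_iff]
    exact ⟨t₀, s₀, by simp, hs₀, rfl⟩
  · rw [Function.update_of_ne hv, Bool.eq_iff_iff, chainAssignment_eq_true_iff,
      chainAssignment_eq_true_iff]
    refine ⟨fun ⟨t, s, hs, hsk, h⟩ => ⟨t, s, ?_, hsk, h⟩, fun ⟨t, s, hs, hsk, h⟩ => ⟨t, s, ?_, hsk, h⟩⟩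
    · by_cases ht : t = t₀
      · subst ht
        rw [Function.update_self] at hs
        rcases hs with rfl | hs
        · exact absurd h hv
        · exact hs
      · rwa [Function.update_of_ne ht] at hs
    · by_cases ht : t = t₀
      · subst ht; simp [hs]
      · rwa [Function.update_of_ne ht]

end ChainAssignment

def levelSlots (A : Set (Fin (k+1))) : Set ℕ := {s | ∃ l ∈ A, s = l.1 ∨ s = l.1 + 1}

lemma mem_levelSlots_and_succ_iff {A : Set (Fin (k+1))}
    (hA : ∀ l ∈ A, ∀ l' ∈ A, l'.1 ≠ l.1 + 2) (l : Fin (k+1)) :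
    l.1 ∈ levelSlots A ∧ l.1 + 1 ∈ levelSlots A ↔ l ∈ A := by
  constructor
  · rintro ⟨⟨l₁, h₁, e₁ | e₁⟩, ⟨l₂, h₂, e₂ | e₂⟩⟩
    · rwa [Fin.ext e₁]
    · rwa [Fin.ext e₁]
    · exact absurd (by omega) (hA l₁ h₁ l₂ h₂)
    · rwa [Fin.ext (by omega : l.1 = l₂.1)]
  · exact fun h => ⟨⟨l, h, Or.inl rfl⟩, ⟨l, h, Or.inr rfl⟩⟩

lemma exists_linkedAt_iff {ι : Type} {w : ι → Fin n × Fin n} {S : ι → Set ℕ}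
    {A : ι → Set (Fin (k+1))} {l : Fin (k+1)}
    (hdiag : ∀ t, l.1 ∈ S t ∧ l.1 + 1 ∈ S t ↔ l ∈ A t)
    (hoff : ∀ t t', t ≠ t' → LinkedAt k l (w t) (w t') → ¬ (l.1 ∈ S t ∧ l.1 + 1 ∈ S t')) :
    (∃ t t', l.1 ∈ S t ∧ l.1 + 1 ∈ S t' ∧ LinkedAt k l (w t) (w t')) ↔ ∃ t, l ∈ A t := by
  constructor
  · rintro ⟨t, t', h, h', hlink⟩
    by_cases htt : t = t'
    · subst htt
      exact ⟨t, (hdiag t).mp ⟨h, h'⟩⟩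
    · exact absurd ⟨h, h'⟩ (hoff t t' htt hlink)
  · rintro ⟨t, h⟩
    exact ⟨t, t, ((hdiag t).mpr h).1, ((hdiag t).mpr h).2, LinkedAt.refl _ _⟩

/-- `σ` alternates in blocks of two, anchored at the end of the range that `P` or `Q` says
to avoid. -/
lemma exists_schedule (k : ℕ) {P Q : Prop} (h : ¬ (P ∧ Q)) :
    ∃ σ : Fin (k+1) → Bool, (∀ l l' : Fin (k+1), l'.1 = l.1 + 2 → σ l ≠ σ l') ∧
      ∀ l, σ l = false → (P → 2 ≤ l.1) ∧ (Q → l.1 + 2 ≤ k) := by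
  by_cases hP : P
  · refine ⟨fun l => decide (l.1 / 2 % 2 = 0), fun l l' hl => ?_, fun l hl => ?_⟩
    · simp only [ne_eq, decide_eq_decide]
      omega
    · simp only [decide_eq_false_iff_not] at hl
      exact ⟨fun _ => by omega, fun hQ => absurd ⟨hP, hQ⟩ h⟩
  · refine ⟨fun l => decide ((k - l.1) / 2 % 2 = 0), fun l l' hl => ?_, fun l hl => ?_⟩
    · have := l'.isLt
      simp only [ne_eq, decide_eq_decide]
      omega
    · simp only [decide_eq_false_iff_not] at hl
      exact ⟨fun hP' => absurd hP' hP, fun _ => by omega⟩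

lemma exists_helpers {S : Finset (Fin n × Fin n)} (hcard : 3 ≤ S.card)
    (hS : (S : Set (Fin n × Fin n)).Pairwise IndepPairs) (c : Fin n × Fin n) :
    ∃ d ∈ S, ∃ e ∈ S, d ≠ c ∧ IndepPairs e c ∧ IndepPairs e d := by
  have hline : ∀ p : Fin n × Fin n → Prop, [DecidablePred p] →
      (∀ a b, p a → p b → a.1 = b.1 ∨ a.2 = b.2) → (S.filter p).card ≤ 1 := by
    intro p _ hp
    refine Finset.card_le_one.mpr fun a ha b hb => ?_
    rw [Finset.mem_filter] at ha hb
    by_contra hab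
    have := hS ha.1 hb.1 hab
    rcases hp a b ha.2 hb.2 with h | h
    exacts [this.1 h, this.2 h]
  have hrow := hline (·.1 = c.1) (fun a b ha hb => Or.inl (ha.trans hb.symm))
  have hcol := hline (·.2 = c.2) (fun a b ha hb => Or.inr (ha.trans hb.symm))
  obtain ⟨e, heS, he⟩ := Finset.exists_mem_notMem_of_card_lt_card
    (s := S.filter (·.1 = c.1) ∪ S.filter (·.2 = c.2)) (t := S)
    (by have := Finset.card_union_le (S.filter (·.1 = c.1)) (S.filter (·.2 = c.2)); omega)
  simp only [Finset.mem_union, Finset.mem_filter, heS, true_and, not_or] at he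
  obtain ⟨d, hd⟩ : ((S.erase e).erase c).Nonempty := by
    rw [← Finset.card_pos]
    have h1 := Finset.pred_card_le_card_erase (s := S) (a := e)
    have h2 := Finset.pred_card_le_card_erase (s := S.erase e) (a := c)
    omega
  simp only [Finset.mem_erase] at hd
  exact ⟨d, hd.2.2, e, heS, hd.1, he, hS heS hd.2.2 (Ne.symm hd.2.1)⟩

section Construction

variable (c d e : Fin n × Fin n) (L : Fin (k+1)) (μ σ : Fin (k+1) → Bool)

def helperPath : Option Bool → Fin n × Fin n
  | none => c
  | some false => d
  | some true => e

def helperLevels (β : Bool) : Set (Fin (k+1)) := {l | l ≠ L ∧ μ l = true ∧ σ l = β}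

/-- `sX` is the slot of the variable toggled by `b`, `sY` that of its partner in `P_{L,c}`. -/
def helperSlots (sX sY : ℕ) (b : Bool) : Option Bool → Set ℕ
  | none => if b then {sX, sY} else {sY}
  | some β => levelSlots (helperLevels L μ σ β)

variable {c d e L μ σ}

lemma helperSlots_true {sX sY : ℕ} :
    helperSlots L μ σ sX sY true =
      Function.update (helperSlots L μ σ sX sY false) none
        (insert sX (helperSlots L μ σ sX sY false none)) := by
  funext t
  rcases t with _ | β <;> simp [helperSlots]

lemma helper_bounds_of_mem_levelSlots
    (hfar : ∀ l, σ l = false → (d.1 = c.1 → 2 ≤ l.1) ∧ (d.2 = c.2 → l.1 + 2 ≤ k))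
    {s : ℕ} (hs : s ∈ levelSlots (helperLevels L μ σ false)) :
    (d.1 = c.1 → 2 ≤ s) ∧ (d.2 = c.2 → s + 1 ≤ k) := by
  obtain ⟨l, ⟨-, -, hl⟩, hsl⟩ := hs
  have := hfar l hl
  omega

lemma notMem_levelSlots_of_linkedAt (hk : 1 ≤ k) (hdc : d ≠ c)
    (hfar : ∀ l, σ l = false → (d.1 = c.1 → 2 ≤ l.1) ∧ (d.2 = c.2 → l.1 + 2 ≤ k))
    {l : ℕ} (hl : l ≤ k) (hlink : LinkedAt k l c d) {s : ℕ} (hsl : s = l ∨ s = l + 1) :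
    s ∉ levelSlots (helperLevels L μ σ false) := fun hs => by
  have := helper_bounds_of_mem_levelSlots hfar hs
  by_cases h0 : 0 < l <;> by_cases hlk : l < k
  · exact hdc (Prod.ext (hlink.1 hlk).symm (hlink.2 h0).symm)
  all_goals first
    | exact absurd (hlink.1 hlk).symm (fun h => by omega)
    | exact absurd (hlink.2 h0).symm (fun h => by omega)
    | omega

variable {θ : HVar n k → Option Bool} {sX sY : ℕ}

lemma restrict_hfun_helperSlots (hk : 1 ≤ k) (hc : Transversal n k θ c)
    (hd : Transversal n k θ d) (he : Transversal n k θ e) (hdc : d ≠ c)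
    (hec : IndepPairs e c) (hed : IndepPairs e d)
    (hgap : ∀ l l' : Fin (k+1), l'.1 = l.1 + 2 → σ l ≠ σ l')
    (hfar : ∀ l, σ l = false → (d.1 = c.1 → 2 ≤ l.1) ∧ (d.2 = c.2 → l.1 + 2 ≤ k))
    (hs : sX = L ∧ sY = L + 1 ∨ sX = L + 1 ∧ sY = L) (b : Bool) (l : Fin (k+1)) :
    BF.restrict (Hfun n k l) θ (chainAssignment (helperPath c d e) (helperSlots L μ σ sX sY b)) =
      Function.update μ L b l := by
  have hw : ∀ t, Transversal n k θ (helperPath c d e t) := by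
    rintro (_ | _ | _) <;> assumption
  rw [restrict_hfun_chainAssignment hw, Bool.eq_iff_iff, hfun_chainAssignment_eq_true_iff,
    exists_linkedAt_iff (A := fun t => t.elim {l | l = L ∧ b = true} (helperLevels L μ σ))]
  · rw [Option.exists, Function.update_apply]
    by_cases hlL : l = L <;> cases b <;> cases hμ : μ l <;> simp [helperLevels, hlL, hμ]
  · rintro (_ | β)
    · have := l.isLt
      cases b <;> simp [helperSlots, Fin.ext_iff] <;> omega
    · refine mem_levelSlots_and_succ_iff (fun l₁ h₁ l₂ h₂ h₁₂ => ?_) l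
      exact hgap l₁ l₂ h₁₂ (h₁.2.2.trans h₂.2.2.symm)
  · have := l.isLt
    rintro (_ | _ | _) (_ | _ | _) hne hlink ⟨h₁, h₂⟩
    all_goals first
      | exact hne rfl
      | exact notMem_levelSlots_of_linkedAt hk hdc hfar (by omega) hlink (Or.inr rfl) h₂
      | exact notMem_levelSlots_of_linkedAt hk hdc hfar (by omega) hlink.symm (Or.inl rfl) h₁
      | exact hec.not_linkedAt hk (by omega) hlink
      | exact hec.symm.not_linkedAt hk (by omega) hlink
      | exact hed.not_linkedAt hk (by omega) hlink
      | exact hed.symm.not_linkedAt hk (by omega) hlink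


lemma chainAssignment_helperSlots_false_chain (hk : 1 ≤ k) (hdc : d ≠ c) (hec : IndepPairs e c)
    (hfar : ∀ l, σ l = false → (d.1 = c.1 → 2 ≤ l.1) ∧ (d.2 = c.2 → l.1 + 2 ≤ k))
    (hs : sX = L ∧ sY = L + 1 ∨ sX = L + 1 ∧ sY = L) :
    chainAssignment (helperPath c d e) (helperSlots L μ σ sX sY false) (chain c sX : HVar n k) =
      false := by
  have hsX : sX ≤ k + 1 := by have := L.isLt; omega
  rw [Bool.eq_false_iff, ne_eq, chainAssignment_eq_true_iff]
  rintro ⟨t, s, hst, hs', h⟩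
  obtain rfl := slot_eq_of_chain_eq hsX hs' h
  rcases t with _ | _ | _
  · simp [helperSlots] at hst
    omega
  · exact notMem_levelSlots_of_linkedAt hk hdc hfar (min_le_right _ _)
      (linkedAt_of_chain_eq h) (by omega) hst
  · exact hec.symm.not_linkedAt hk (min_le_right _ _) (linkedAt_of_chain_eq h)

end Construction
lemma dependsOnVar_restrict_psi_chain (hk : 1 ≤ k) {f : (Fin (k+1) → Bool) → Bool}
    {L : Fin (k+1)} (hf : BoolDependsOn f L) {θ : HVar n k → Option Bool}
    {c d e : Fin n × Fin n} (hc : Transversal n k θ c) (hd : Transversal n k θ d)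
    (he : Transversal n k θ e) (hdc : d ≠ c) (hec : IndepPairs e c) (hed : IndepPairs e d)
    {sX sY : ℕ} (hs : sX = L ∧ sY = L + 1 ∨ sX = L + 1 ∧ sY = L) :
    BF.DependsOnVar (BF.restrict (Psi n k f) θ) (chain c sX) := by
  obtain ⟨μ, hμ⟩ := hf
  obtain ⟨σ, hgap, hfar⟩ := exists_schedule k (fun h : d.1 = c.1 ∧ d.2 = c.2 =>
    hdc (Prod.ext h.1 h.2))
  have hsX : sX ≤ k + 1 := by have := L.isLt; omega
  have hX := chainAssignment_helperSlots_false_chain hk hdc hec hfar hs (μ := μ)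
  have hupd : ∀ b, Function.update
      (chainAssignment (helperPath c d e) (helperSlots L μ σ sX sY false)) (chain c sX) b =
      (chainAssignment (helperPath c d e) (helperSlots L μ σ sX sY b) : HVar n k → Bool) := by
    rintro (_ | _)
    · exact Function.update_eq_self_iff.mpr hX.symm
    · rw [helperSlots_true]
      exact (chainAssignment_insert (t₀ := none) hsX hX).symm
  have hval : ∀ b, BF.restrict (Psi n k f) θ
      (chainAssignment (helperPath c d e) (helperSlots L μ σ sX sY b)) =
      f (Function.update μ L b) := fun b =>
    congrArg f (funext fun l =>
      restrict_hfun_helperSlots hk hc hd he hdc hec hed hgap hfar hs b l)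
  refine ⟨chainAssignment (helperPath c d e) (helperSlots L μ σ sX sY false), ?_⟩
  rw [hupd, hupd, hval, hval]
  rcases hμ with h | h <;> simp [h]

theorem transversal_vars_relevant_general (n k : ℕ) (hk : 1 ≤ k)
    (f : (Fin (k+1) → Bool) → Bool) (hf : ∀ l, BoolDependsOn f l)
    (θ : HVar n k → Option Bool) (hθ : HasIndepTransversals n k θ 3) :
    ∀ p : Fin n × Fin n, Transversal n k θ p → ∀ l : Fin (k+1),
      BF.DependsOnVar (BF.restrict (Psi n k f) θ) (leftVar n k l p.1 p.2) ∧
      BF.DependsOnVar (BF.restrict (Psi n k f) θ) (rightVar n k l p.1 p.2) := by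
  intro c hc l
  obtain ⟨S, hcard, hS, hpw⟩ := hθ
  obtain ⟨d, hdS, e, heS, hdc, hec, hed⟩ := exists_helpers hcard hpw c
  rw [leftVar_eq_chain, rightVar_eq_chain]
  exact ⟨dependsOnVar_restrict_psi_chain hk (hf l) hc (hS d hdS) (hS e heS) hdc hec hed
      (Or.inl ⟨rfl, rfl⟩),
    dependsOnVar_restrict_psi_chain hk (hf l) hc (hS d hdS) (hS e heS) hdc hec hed
      (Or.inr ⟨rfl, rfl⟩)⟩

/-- If `f` depends on all of its `k+1` variables,
`Ψ = f(H_{k0},…,H_{kk})`, and `θ` has at least 3 pairwise independent transversals,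
then every variable occurring in a prime implicant `P_{ℓ,i,j}` indexed by a
transversal `(i,j)` of `θ` is a variable on which `Ψ[θ]` depends. -/
theorem transversal_vars_relevant (n k : ℕ) (hn : 1 ≤ n) (hk : 1 ≤ k)
    (f : (Fin (k+1) → Bool) → Bool) (hf : ∀ l, BoolDependsOn f l)
    (θ : HVar n k → Option Bool) (hθ : HasIndepTransversals n k θ 3) :
    ∀ p : Fin n × Fin n, Transversal n k θ p → ∀ l : Fin (k+1),
      BF.DependsOnVar (BF.restrict (Psi n k f) θ) (leftVar n k l p.1 p.2) ∧
      BF.DependsOnVar (BF.restrict (Psi n k f) θ) (rightVar n k l p.1 p.2) :=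
  transversal_vars_relevant_general n k hk f hf θ hθ
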